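/- Let φ : ℝ → ℝ be defined by φ(ξ) = 0 for ξ < 0, φ(ξ) = −√ξ for ξ ∈ [0,1], and φ(ξ) = −1 for ξ > 1, and define ρ : ℓ² → ℓ² by ρ(α)ₙ = (1/n)·φ(αₙ). Then ρ is well-defined (maps ℓ² into ℓ²), satisfies the dissipativity condition ⟨α − β, ρ(α) − ρ(β)⟩ ≤ 0 for all α, β ∈ ℓ², and is uniformly bounded with ‖ρ(α)‖² ≤ Σ_{n=1}^∞ 1/n² for all α ∈ ℓ², but ρ is not Lipschitz continuous: there is no finite M with ‖ρ(α) − ρ(β)‖ ≤ M‖α − β‖ for all α, β ∈ ℓ². -/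

import Mathlib

noncomputable def phi (ξ : ℝ) : ℝ :=
  if ξ < 0 then 0 else if ξ ≤ 1 then -Real.sqrt ξ else -1

/-- The nonlinearity ρ on ℓ², acting coordinatewise: ρ(α)ₙ = (1/n)·φ(αₙ)
(coordinates indexed from 1, here `n : ℕ` corresponds to coordinate `n+1`). -/
noncomputable def rho (α : ℕ → ℝ) : ℕ → ℝ :=
  fun n => (1 / (n + 1 : ℝ)) * phi (α n)

/-! Since `|φ| ≤ 1`, the coordinates of ρ(α) are dominated by `1/(n+1)`, and since φ is
nonincreasing every term of the dissipativity sum is `≤ 0`. Lipschitz continuity fails at `0`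
because `√` has infinite slope there: for `c ∈ (0, 1]` the sequence `c • e₀` satisfies
`‖ρ(c • e₀) - ρ(0)‖ = √c` while `‖c • e₀‖ = c`. -/

open Set

lemma phi_nonpos (ξ : ℝ) : phi ξ ≤ 0 := by
  unfold phi
  split_ifs <;> linarith [Real.sqrt_nonneg ξ]

lemma neg_one_le_phi (ξ : ℝ) : -1 ≤ phi ξ := by
  unfold phi
  split_ifs with _ h
  · norm_num
  · linarith [Real.sqrt_le_one.2 h]
  · exact le_rfl

lemma abs_phi_le_one (ξ : ℝ) : |phi ξ| ≤ 1 :=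
  abs_le.2 ⟨neg_one_le_phi ξ, (phi_nonpos ξ).trans zero_le_one⟩

lemma phi_zero : phi 0 = 0 := by simp [phi]

lemma phi_of_mem_Icc {ξ : ℝ} (hξ : ξ ∈ Icc (0 : ℝ) 1) : phi ξ = -√ξ := by
  rw [phi, if_neg hξ.1.not_gt, if_pos hξ.2]

lemma antitone_phi : Antitone phi := by
  intro a b hab
  unfold phi
  split_ifs <;> first
    | linarith [Real.sqrt_nonneg a, Real.sqrt_le_sqrt hab]
    | linarith [Real.sqrt_le_one.2 ‹a ≤ 1›]

lemma rho_zero : rho 0 = 0 := by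
  ext n
  simp [rho, phi_zero]

lemma sq_rho_le (α : ℕ → ℝ) (n : ℕ) : rho α n ^ 2 ≤ 1 / (n + 1 : ℝ) ^ 2 := by
  have hphi : phi (α n) ^ 2 ≤ 1 := sq_le_one_iff_abs_le_one _ |>.2 (abs_phi_le_one _)
  calc rho α n ^ 2 = 1 / (n + 1 : ℝ) ^ 2 * phi (α n) ^ 2 := by rw [rho, mul_pow, div_pow, one_pow]
    _ ≤ 1 / (n + 1 : ℝ) ^ 2 := mul_le_of_le_one_right (by positivity) hphi

lemma summable_one_div_succ_sq : Summable fun n : ℕ => 1 / (n + 1 : ℝ) ^ 2 := by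
  simpa using (summable_nat_add_iff 1).2 (Real.summable_one_div_nat_pow.2 one_lt_two)

lemma summable_sq_rho (α : ℕ → ℝ) : Summable fun n => rho α n ^ 2 :=
  summable_one_div_succ_sq.of_nonneg_of_le (fun _ => sq_nonneg _) (sq_rho_le α)

lemma memℓp_two_of_summable_sq {ι : Type*} {f : ι → ℝ} (hf : Summable fun i => f i ^ 2) :
    Memℓp f 2 :=
  memℓp_gen <| by simpa [Real.norm_eq_abs] using hf

lemma sub_mul_rho_sub_nonpos (α β : ℕ → ℝ) (n : ℕ) :
    (α n - β n) * (rho α n - rho β n) ≤ 0 := by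
  have hphi : (phi (α n) - phi (β n)) * (α n - β n) ≤ 0 :=
    (antitone_phi.antivary monotone_id).sub_mul_sub_nonpos (β n) (α n)
  calc (α n - β n) * (rho α n - rho β n)
      = 1 / (n + 1 : ℝ) * ((phi (α n) - phi (β n)) * (α n - β n)) := by simp only [rho]; ring
    _ ≤ 0 := mul_nonpos_of_nonneg_of_nonpos (by positivity) hphi

lemma tsum_sq_single_zero (c : ℝ) : ∑' n : ℕ, Pi.single 0 c n ^ 2 = c ^ 2 := by
  rw [tsum_eq_single 0 fun n hn => by simp [Pi.single_eq_of_ne hn], Pi.single_eq_same]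

lemma tsum_sq_rho_single_zero {c : ℝ} (hc : c ∈ Icc (0 : ℝ) 1) :
    ∑' n : ℕ, rho (Pi.single 0 c) n ^ 2 = c := by
  rw [tsum_eq_single 0 fun n hn => by simp [rho, Pi.single_eq_of_ne hn, phi_zero]]
  simp [rho, phi_of_mem_Icc hc, Real.sq_sqrt hc.1]

lemma exists_mul_lt_sqrt (M : ℝ) : ∃ c ∈ Ioc (0 : ℝ) 1, M * c < √c := by
  set c : ℝ := 1 / (M ^ 2 + 1) with hc_def
  have hc : 0 < c := by positivity
  have hMc : M ^ 2 * c < 1 := by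
    rw [hc_def, mul_one_div, div_lt_one (by positivity)]
    linarith
  refine ⟨c, ⟨hc, div_le_one_of_le₀ (by nlinarith) (by positivity)⟩, ?_⟩
  calc M * c ≤ |M| * c := by gcongr; exact le_abs_self M
    _ < √c := (Real.lt_sqrt (by positivity)).2 <| by
      rw [mul_pow, sq_abs]
      nlinarith

theorem stmt_18 :
    (∀ α : ℕ → ℝ, Memℓp α 2 → Memℓp (rho α) 2) ∧
    (∀ α β : ℕ → ℝ, Memℓp α 2 → Memℓp β 2 →
      (∑' n : ℕ, (α n - β n) * (rho α n - rho β n)) ≤ 0) ∧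
    (∀ α : ℕ → ℝ, (∑' n : ℕ, (rho α n) ^ 2) ≤ ∑' n : ℕ, (1 : ℝ) / (n + 1) ^ 2) ∧
    ¬ ∃ M : ℝ, ∀ α β : ℕ → ℝ, Memℓp α 2 → Memℓp β 2 →
        Real.sqrt (∑' n : ℕ, (rho α n - rho β n) ^ 2) ≤
          M * Real.sqrt (∑' n : ℕ, (α n - β n) ^ 2) := by
  refine ⟨fun α _ => memℓp_two_of_summable_sq (summable_sq_rho α),
    fun α β _ _ => tsum_nonpos (sub_mul_rho_sub_nonpos α β),
    fun α => (summable_sq_rho α).tsum_le_tsum (sq_rho_le α) summable_one_div_succ_sq, ?_⟩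
  rintro ⟨M, hM⟩
  obtain ⟨c, hc, hMc⟩ := exists_mul_lt_sqrt M
  have hlip := hM (Pi.single 0 c) 0 (lp.single (E := fun _ : ℕ => ℝ) 2 0 c).prop zero_memℓp
  simp only [rho_zero, Pi.zero_apply, sub_zero, tsum_sq_single_zero,
    tsum_sq_rho_single_zero (Ioc_subset_Icc_self hc), Real.sqrt_sq hc.1.le] at hlip
  linarith
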